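/- arXiv:1006.5096 — 2 statements merged into one kernel-verified Lean document; each statement's English description precedes it below -/
import Mathlib

section
/- Let Γ = (X, ⊑) be an almost complete meet-semilattice with least element ⊥, Γ♯ = (X♯, ⊆) a poset with least element ⊥♯, and γ : X♯ → X monotone with γ(⊥♯) = ⊥. Let f : X → X be monotone with a pre-fixed point in X, and let f♯ : X♯ → X♯ be a b-abstraction of f. Then the supremum of the set {γ(f♯⁽ⁱ⁾(⊥♯)) : i ∈ ℕ} exists in X and satisfies ⊔ᵢ γ(f♯⁽ⁱ⁾(⊥♯)) ⊑ μ.f, where μ.f is the least fixed point of f. -/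
/-- Abstract fixed point approximation: if `f♯` is a b-abstraction of a
monotone `f` with a pre-fixed point, over an almost complete
meet-semilattice, then the supremum of the concretized abstract iterates
exists and is below the least fixed point of `f`. -/
theorem abstract_iterates_sup_le_lfp
    {X : Type*} [PartialOrder X] [OrderBot X]
    {Xs : Type*} [PartialOrder Xs] [OrderBot Xs]
    (hacms : ∀ T : Set X, T.Nonempty → ∃ a, IsGLB T a)
    (γ : Xs → X) (hγ : Monotone γ) (hγbot : γ ⊥ = ⊥)
    (f : X → X) (hmono : Monotone f) (hpre : ∃ x, f x ≤ x)
    (fs : Xs → Xs)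
    (habs : ∀ (x : X) (xs : Xs), γ xs ≤ x → γ (fs xs) ≤ f x) :
    ∃ s, IsLUB (Set.range fun i => γ (fs^[i] ⊥)) s ∧
      ∀ μ, IsLeast {x | f x = x} μ → s ≤ μ := by
  -- every pre-fixed point is an upper bound of the iterates
  have key : ∀ x, f x ≤ x → ∀ i, γ (fs^[i] ⊥) ≤ x := by
    intro x hx i
    induction i with
    | zero => simpa [hγbot] using (bot_le : (⊥ : X) ≤ x)
    | succ n ih =>
      rw [Function.iterate_succ_apply']
      exact le_trans (habs x _ ih) hx
  obtain ⟨p, hp⟩ := hpre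
  set S := Set.range fun i => γ (fs^[i] ⊥) with hS
  have hub : (upperBounds S).Nonempty := ⟨p, by
    rintro _ ⟨i, rfl⟩; exact key p hp i⟩
  obtain ⟨s, hs⟩ := hacms (upperBounds S) hub
  have hlub : IsLUB S s := by
    constructor
    · rintro _ ⟨i, rfl⟩
      exact hs.2 fun u hu => hu ⟨i, rfl⟩
    · exact fun u hu => hs.1 hu
  refine ⟨s, hlub, fun μ hμ => ?_⟩
  exact hlub.2 fun _ ⟨i, hi⟩ => hi ▸ key μ hμ.1.le i
end

section
/- Let S be a countable set. The up-closure and convex-closure operations on subsets of SubPr(S) preserve Cauchy-closedness: if ξ ⊆ SubPr(S) is Cauchy-closed (contains all pointwise limits of its pointwise-convergent sequences that lie in SubPr(S)), then the up-closure {Δ' | ∃Δ∈ξ, Δ ⊑ Δ'} ∩ SubPr(S) and the convex hull of ξ, applied to a finite ξ, are Cauchy-closed; in particular the closure of a finite generator set under up-closure and convex combinations is Cauchy-closed. -/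
open Filter Topology

/-- Discrete sub-probability measures on `S`. -/
def SubPr (S : Type*) : Set (S → NNReal) :=
  {Δ | ∑' s, (Δ s : ENNReal) ≤ 1}

/-- A set of sub-distributions is Cauchy-closed if it contains the pointwise
limit (within `SubPr S`) of every pointwise-convergent sequence of its
elements. -/
def CauchyClosed {S : Type*} (ξ : Set (S → NNReal)) : Prop :=
  ∀ (Δseq : ℕ → S → NNReal) (Δ : S → NNReal),
    (∀ n, Δseq n ∈ ξ) →
    (∀ s, Tendsto (fun n => Δseq n s) atTop (𝓝 (Δ s))) →
    Δ ∈ SubPr S → Δ ∈ ξ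

/-- Up-closure of `ξ` within `SubPr S`. -/
def upClosure {S : Type*} (ξ : Set (S → NNReal)) : Set (S → NNReal) :=
  {Δ' | (∃ Δ ∈ ξ, ∀ s, Δ s ≤ Δ' s)} ∩ SubPr S

/-- A set is convex closed if it contains all binary convex combinations. -/
def ConvexClosed {S : Type*} (ξ : Set (S → NNReal)) : Prop :=
  ∀ Δ₀ ∈ ξ, ∀ Δ₁ ∈ ξ, ∀ p : NNReal, p ≤ 1 →
    (fun s => p * Δ₀ s + (1 - p) * Δ₁ s) ∈ ξ

/-- The convex closure (hull): least convex-closed superset. -/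
def convexClosure {S : Type*} (ξ : Set (S → NNReal)) : Set (S → NNReal) :=
  ⋂₀ {η | ξ ⊆ η ∧ ConvexClosed η}

section Aux

variable {S : Type*}

lemma SubPr.coord_le_one {Δ : S → NNReal} (h : Δ ∈ SubPr S) (s : S) : Δ s ≤ 1 := by
  have h1 : (Δ s : ENNReal) ≤ 1 := le_trans (ENNReal.le_tsum s) h
  exact_mod_cast h1

lemma SubPr.mono {Δ Δ' : S → NNReal} (hle : ∀ s, Δ s ≤ Δ' s) (h : Δ' ∈ SubPr S) :
    Δ ∈ SubPr S :=
  le_trans (ENNReal.tsum_le_tsum fun s => ENNReal.coe_le_coe.2 (hle s)) h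

lemma upClosure_cauchyClosed [Countable S] {ξ : Set (S → NNReal)}
    (hsub : ξ ⊆ SubPr S) (hcc : CauchyClosed ξ) : CauchyClosed (upClosure ξ) := by
  intro Δseq Δ hmem hlim hΔ
  choose Γ hΓξ hΓle using fun n => (hmem n).1
  have hK : IsCompact (Set.univ.pi fun _ : S => Set.Icc (0 : NNReal) 1) :=
    isCompact_univ_pi fun _ => isCompact_Icc
  have hmemK : ∀ n, Γ n ∈ Set.univ.pi fun _ : S => Set.Icc (0 : NNReal) 1 := by
    intro n s _
    exact ⟨zero_le, SubPr.coord_le_one (hsub (hΓξ n)) s⟩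
  obtain ⟨Γ₀, -, φ, hφ, hto⟩ := hK.isSeqCompact hmemK
  have hto' : ∀ s, Tendsto (fun n => Γ (φ n) s) atTop (𝓝 (Γ₀ s)) := fun s =>
    tendsto_pi_nhds.1 hto s
  have hle : ∀ s, Γ₀ s ≤ Δ s := fun s =>
    le_of_tendsto_of_tendsto' (hto' s) ((hlim s).comp hφ.tendsto_atTop)
      (fun n => hΓle (φ n) s)
  have hΓ₀ : Γ₀ ∈ ξ :=
    hcc (fun n => Γ (φ n)) Γ₀ (fun n => hΓξ (φ n)) hto' (SubPr.mono hle hΔ)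
  exact ⟨⟨Γ₀, hΓ₀, hle⟩, hΔ⟩

lemma subPr_convexClosed : ConvexClosed (SubPr S) := by
  intro Δ₀ h₀ Δ₁ h₁ p hp
  show ∑' s, ((p * Δ₀ s + (1 - p) * Δ₁ s : NNReal) : ENNReal) ≤ 1
  calc ∑' s, ((p * Δ₀ s + (1 - p) * Δ₁ s : NNReal) : ENNReal)
      = ∑' s, ((p : ENNReal) * Δ₀ s + ((1 - p : NNReal) : ENNReal) * Δ₁ s) :=
        tsum_congr fun s => by push_cast; ring
    _ = (p : ENNReal) * ∑' s, (Δ₀ s : ENNReal)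
        + ((1 - p : NNReal) : ENNReal) * ∑' s, (Δ₁ s : ENNReal) := by
        rw [ENNReal.tsum_add, ENNReal.tsum_mul_left, ENNReal.tsum_mul_left]
    _ ≤ (p : ENNReal) * 1 + ((1 - p : NNReal) : ENNReal) * 1 := by
        gcongr
        · exact h₀
        · exact h₁
    _ = ((p + (1 - p) : NNReal) : ENNReal) := by push_cast; ring
    _ = 1 := by rw [add_tsub_cancel_of_le hp]; norm_num

lemma convexClosure_subset_subPr {ξ : Set (S → NNReal)} (hsub : ξ ⊆ SubPr S) :
    convexClosure ξ ⊆ SubPr S :=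
  fun _ hΔ => Set.mem_sInter.1 hΔ (SubPr S) ⟨hsub, subPr_convexClosed⟩

lemma convexClosure_cauchyClosed {ξ : Set (S → NNReal)} (hfin : ξ.Finite) :
    CauchyClosed (convexClosure ξ) := by
  rcases ξ.eq_empty_or_nonempty with rfl | hne
  · intro Δseq Δ hmem _ _
    have : ConvexClosed (∅ : Set (S → NNReal)) := fun Δ₀ h₀ => absurd h₀ (Set.notMem_empty _)
    exact absurd (Set.mem_sInter.1 (hmem 0) ∅ ⟨subset_rfl, this⟩) (Set.notMem_empty _)
  · classical
    haveI : Fintype ξ := hfin.fintype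
    set F : (ξ → NNReal) → (S → NNReal) := fun w s => ∑ i : ξ, w i * (i : S → NNReal) s with hF
    set A : Set (S → NNReal) := {Δ | ∃ w : ξ → NNReal, (∑ i : ξ, w i) = 1 ∧ Δ = F w} with hA
    -- ξ ⊆ A
    have hξA : ξ ⊆ A := by
      intro Δ₀ h₀
      refine ⟨fun i => if i = ⟨Δ₀, h₀⟩ then 1 else 0, ?_, ?_⟩
      · rw [Finset.sum_ite_eq' Finset.univ (⟨Δ₀, h₀⟩ : ξ) fun _ => (1 : NNReal)]
        simp
      · funext s
        simp [hF, ite_mul, Finset.sum_ite_eq']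
    -- A convex closed
    have hAcc : ConvexClosed A := by
      rintro _ ⟨w₀, hw₀, rfl⟩ _ ⟨w₁, hw₁, rfl⟩ p hp
      refine ⟨fun i => p * w₀ i + (1 - p) * w₁ i, ?_, ?_⟩
      · rw [Finset.sum_add_distrib, ← Finset.mul_sum, ← Finset.mul_sum, hw₀, hw₁,
          mul_one, mul_one, add_tsub_cancel_of_le hp]
      · funext s
        simp only [hF]
        rw [Finset.mul_sum, Finset.mul_sum, ← Finset.sum_add_distrib]
        exact Finset.sum_congr rfl fun i _ => by ring
    -- A is contained in every convex-closed superset of ξ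
    have hAsub : A ⊆ convexClosure ξ := by
      rintro _ ⟨w, hw, rfl⟩ η ⟨hξη, hη⟩
      set e : (S → NNReal) → (S → ℝ) := fun Δ s => (Δ s : ℝ) with he
      have hei : Function.Injective e := fun a b h =>
        funext fun s => NNReal.coe_injective (congrFun h s)
      have hconv : Convex ℝ (e '' η) := by
        rintro x ⟨Δ₀, h₀, rfl⟩ y ⟨Δ₁, h₁, rfl⟩ a b ha hb hab
        have ha1 : a ≤ 1 := by linarith
        have hp : a.toNNReal ≤ 1 := by
          rw [← Real.toNNReal_one]; exact Real.toNNReal_mono ha1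
        refine ⟨fun s => a.toNNReal * Δ₀ s + (1 - a.toNNReal) * Δ₁ s,
          hη Δ₀ h₀ Δ₁ h₁ _ hp, ?_⟩
        have h1 : ((1 - a.toNNReal : NNReal) : ℝ) = b := by
          rw [NNReal.coe_sub hp, NNReal.coe_one, Real.coe_toNNReal a ha]; linarith
        funext s
        show ((a.toNNReal * Δ₀ s + (1 - a.toNNReal) * Δ₁ s : NNReal) : ℝ)
          = (a • e Δ₀ + b • e Δ₁) s
        rw [NNReal.coe_add, NNReal.coe_mul, NNReal.coe_mul, h1, Real.coe_toNNReal a ha]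
        simp [he]
      have hsum1 : ∑ i : ξ, (w i : ℝ) = 1 := by
        rw [← NNReal.coe_sum, hw, NNReal.coe_one]
      have hmem : (∑ i : ξ, (w i : ℝ) • e i.1) ∈ e '' η :=
        hconv.sum_mem (fun i _ => (w i).coe_nonneg) hsum1 (fun i _ => ⟨i.1, hξη i.2, rfl⟩)
      obtain ⟨Δ', hΔ'η, hΔ'e⟩ := hmem
      have heq : e (F w) = ∑ i : ξ, (w i : ℝ) • e i.1 := by
        funext s
        rw [Finset.sum_apply]
        show ((∑ i : ξ, w i * (i : S → NNReal) s : NNReal) : ℝ) = _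
        rw [NNReal.coe_sum]
        exact Finset.sum_congr rfl fun i _ => by simp [he]
      have : Δ' = F w := hei (by rw [hΔ'e, heq])
      exact this ▸ hΔ'η
    -- A is compact, hence closed
    have hW : IsCompact {w : ξ → NNReal | ∑ i : ξ, w i = 1} := by
      have hWsub : {w : ξ → NNReal | ∑ i : ξ, w i = 1}
          ⊆ Set.univ.pi fun _ : ξ => Set.Icc (0 : NNReal) 1 := by
        intro w hw i _
        refine ⟨zero_le, ?_⟩
        calc w i ≤ ∑ j : ξ, w j :=
              Finset.single_le_sum (fun j _ => zero_le) (Finset.mem_univ i)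
          _ = 1 := hw
      exact (isCompact_univ_pi fun _ => isCompact_Icc).of_isClosed_subset
        (isClosed_eq (continuous_finset_sum _ fun i _ => continuous_apply i)
          continuous_const) hWsub
    have hFcont : Continuous F :=
      continuous_pi fun s =>
        continuous_finset_sum _ fun i _ => (continuous_apply i).mul continuous_const
    have hAeq : A = F '' {w : ξ → NNReal | ∑ i : ξ, w i = 1} :=
      Set.ext fun Δ => ⟨fun ⟨w, hw, h⟩ => ⟨w, hw, h.symm⟩, fun ⟨w, hw, h⟩ => ⟨w, hw, h.symm⟩⟩
    have hAcomp : IsCompact A := hAeq ▸ hW.image hFcont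
    have hAmem : A ∈ {η : Set (S → NNReal) | ξ ⊆ η ∧ ConvexClosed η} := ⟨hξA, hAcc⟩
    have hconvA : convexClosure ξ = A :=
      subset_antisymm (fun Δ hΔ => Set.mem_sInter.1 hΔ A hAmem) hAsub
    rw [hconvA]
    intro Δseq Δ hmem hlim _
    exact hAcomp.isClosed.mem_of_tendsto (tendsto_pi_nhds.2 hlim)
      (Filter.Eventually.of_forall hmem)

end Aux

/-- Up-closure and convex closure preserve Cauchy-closedness (the latter for
finite generator sets); in particular the closure of a finite Cauchy-closed
generator set under these operations is Cauchy-closed. -/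
theorem closures_preserve_cauchyClosed {S : Type*} [Countable S]
    (ξ : Set (S → NNReal)) (hsub : ξ ⊆ SubPr S) (hcc : CauchyClosed ξ) :
    CauchyClosed (upClosure ξ) ∧
    (ξ.Finite → CauchyClosed (convexClosure ξ)) ∧
    (ξ.Finite → CauchyClosed (upClosure (convexClosure ξ))) := by
  exact ⟨upClosure_cauchyClosed hsub hcc,
    fun hfin => convexClosure_cauchyClosed hfin,
    fun hfin => upClosure_cauchyClosed (convexClosure_subset_subPr hsub)
      (convexClosure_cauchyClosed hfin)⟩
end
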